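/- The complex projective plane ℂP² admits a separable Hopf link. -/

import Mathlib

/-!
Formalization following "Embeddings of 4-manifolds in ℂP³" by Ghanwat–Pancholi.

General conventions used throughout:
* An `n`-manifold is a type with a `ChartedSpace` structure over `EuclideanSpace ℝ (Fin n)`
  (or over a half-space model, for manifolds with boundary), which is a smooth manifold.
* "Closed" = compact (and boundaryless, which is automatic for the models `𝓡 n`).
* Orientations are encoded by `MOrientation`: an atlas of smoothly compatible charts with
  values in `ℝⁿ` whose transition maps have positive Jacobian determinant everywhere.
* The complex projective space `ℂPⁿ` is encoded as a type together with a homeomorphism to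
  `CPmodel n`, the projectivization of `ℂⁿ⁺¹` with its quotient topology, together with a
  (quantified) compatible smooth structure.
-/

open scoped Manifold LinearAlgebra.Projectivization
open Set Function Metric Topology

noncomputable section

abbrev En (n : ℕ) := EuclideanSpace ℝ (Fin n)

section Core
variable {EM HM : Type*} [NormedAddCommGroup EM] [NormedSpace ℝ EM] [TopologicalSpace HM]
variable {EM' HM' : Type*} [NormedAddCommGroup EM'] [NormedSpace ℝ EM'] [TopologicalSpace HM']
variable {M : Type*} [TopologicalSpace M] [ChartedSpace HM M]
variable {M' : Type*} [TopologicalSpace M'] [ChartedSpace HM' M']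

/-- A local chart of `M` with values in the normed space `F` which is smoothly compatible
with the smooth structure of `M` (a smooth local parameterization with smooth inverse). -/
def IsSmoothChartOn (I : ModelWithCorners ℝ EM HM) (F : Type*) [NormedAddCommGroup F]
    [NormedSpace ℝ F] (φ : PartialHomeomorph M F) : Prop :=
  ContMDiffOn I 𝓘(ℝ, F) (⊤ : ℕ∞) φ φ.source ∧ ContMDiffOn 𝓘(ℝ, F) I (⊤ : ℕ∞) φ.symm φ.target

/-- An orientation of an `n`-manifold `M`: an atlas of smoothly compatible charts with values
in `ℝⁿ`, covering the interior of `M`, whose transition maps have everywhere positive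
Jacobian determinant. -/
structure MOrientation (I : ModelWithCorners ℝ EM HM) (M : Type*) [TopologicalSpace M]
    [ChartedSpace HM M] (n : ℕ) where
  atlas : Set (PartialHomeomorph M (En n))
  smooth : ∀ e ∈ atlas, IsSmoothChartOn I (En n) e
  covers : ∀ x ∈ ModelWithCorners.interior (I := I) M, ∃ e ∈ atlas, x ∈ e.source
  pos : ∀ e ∈ atlas, ∀ e' ∈ atlas, ∀ p : M, p ∈ e.source → p ∈ e'.source →
    0 < LinearMap.det ((fderiv ℝ (↑e' ∘ ↑e.symm) (e p)).toLinearMap)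

/-- A manifold is orientable if it admits an orientation. -/
def MOrientable (I : ModelWithCorners ℝ EM HM) (M : Type*) [TopologicalSpace M]
    [ChartedSpace HM M] (n : ℕ) : Prop :=
  Nonempty (MOrientation I M n)

/-- The chart `φ` is positively oriented with respect to the orientation `o`. -/
def PosChart {I : ModelWithCorners ℝ EM HM} {n : ℕ} (o : MOrientation I M n)
    (φ : PartialHomeomorph M (En n)) : Prop :=
  ∀ e ∈ o.atlas, ∀ p : M, p ∈ e.source → p ∈ φ.source →
    0 < LinearMap.det ((fderiv ℝ (↑φ ∘ ↑e.symm) (e p)).toLinearMap)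

/-- The chart `φ` is negatively oriented with respect to the orientation `o`. -/
def NegChart {I : ModelWithCorners ℝ EM HM} {n : ℕ} (o : MOrientation I M n)
    (φ : PartialHomeomorph M (En n)) : Prop :=
  ∀ e ∈ o.atlas, ∀ p : M, p ∈ e.source → p ∈ φ.source →
    LinearMap.det ((fderiv ℝ (↑φ ∘ ↑e.symm) (e p)).toLinearMap) < 0

/-- A map between oriented manifolds is orientation preserving. -/
def OrientationPreservingMap {I : ModelWithCorners ℝ EM HM} {I' : ModelWithCorners ℝ EM' HM'}
    {n : ℕ} (o : MOrientation I M n) (o' : MOrientation I' M' n) (f : M → M') : Prop :=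
  ∀ e ∈ o.atlas, ∀ e' ∈ o'.atlas, ∀ p : M, p ∈ e.source → f p ∈ e'.source →
    0 < LinearMap.det ((fderiv ℝ (↑e' ∘ f ∘ ↑e.symm) (e p)).toLinearMap)

/-- `f : M → M'` is a smooth embedding: smooth, an immersion, and a topological embedding. -/
def IsSmoothEmbedding (I : ModelWithCorners ℝ EM HM) (I' : ModelWithCorners ℝ EM' HM')
    (f : M → M') : Prop :=
  ContMDiff I I' (⊤ : ℕ∞) f ∧ (∀ x, Function.Injective (mfderiv I I' f x)) ∧ IsEmbedding f

/-- `f` is a diffeomorphism of `M` (smooth, with smooth inverse). -/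
def IsDiffeomorphismOf (I : ModelWithCorners ℝ EM HM) (f : M → M) : Prop :=
  ContMDiff I I (⊤ : ℕ∞) f ∧ ∃ g : M → M, ContMDiff I I (⊤ : ℕ∞) g ∧
    Function.LeftInverse g f ∧ Function.RightInverse g f

/-- `ψ` is smoothly isotopic to the identity: there is a smooth family of diffeomorphisms
joining the identity to `ψ`. -/
def DiffeotopicToId (I : ModelWithCorners ℝ EM HM) (ψ : M → M) : Prop :=
  ∃ F : ℝ → M → M, ContMDiff (𝓘(ℝ, ℝ).prod I) I (⊤ : ℕ∞) (fun p : ℝ × M => F p.1 p.2) ∧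
    (∀ t, Function.Bijective (F t)) ∧ F 0 = id ∧ F 1 = ψ

end Core

section Models

/-- first complex coordinate on `ℝ⁴ = ℂ²`. -/
def cA (v : En 4) : ℂ := ⟨v 0, v 1⟩
/-- second complex coordinate on `ℝ⁴ = ℂ²`. -/
def cB (v : En 4) : ℂ := ⟨v 2, v 3⟩
def e2 (a b : ℝ) : En 2 := WithLp.toLp 2 ![a, b]
def e4 (a b c d : ℝ) : En 4 := WithLp.toLp 2 ![a, b, c, d]

/-- The local model `(z₁, z₂) ↦ z₁ z₂ : ℂ² → ℂ` of a Lefschetz singularity, as a map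
`ℝ⁴ → ℝ²`. -/
def lefschetzModel : En 4 → En 2 := fun v => e2 (cA v * cB v).re (cA v * cB v).im

/-- The local model `(t, x₁, x₂, x₃) ↦ (t, -x₁² + x₂² + x₃²)` of a `1`-fold singularity. -/
def oneFoldModel : En 4 → En 2 := fun v => e2 (v 0) (-(v 1) ^ 2 + (v 2) ^ 2 + (v 3) ^ 2)

/-- Topological model for complex projective `n`-space: the projectivization of `ℂⁿ⁺¹`
with the quotient topology. -/
abbrev CPmodel (n : ℕ) := ℙ ℂ (Fin (n + 1) → ℂ)

instance (n : ℕ) : TopologicalSpace (CPmodel n) :=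
  inferInstanceAs (TopologicalSpace (Quotient (projectivizationSetoid ℂ (Fin (n + 1) → ℂ))))

/-- The standard `ℂP¹ = {[z₀ : z₁ : 0]}` inside a copy of `ℂP²`.  (The condition
`(h x).rep 2 = 0` does not depend on the choice of representative.) -/
def stdLineCP2 {CP2 : Type*} [TopologicalSpace CP2] (h : CP2 ≃ₜ CPmodel 2) : Set CP2 :=
  {x | (h x).rep 2 = 0}

/-- The standard `ℂP¹ = {[z₀ : z₁ : 0 : 0]}` inside a copy of `ℂP³`. -/
def stdAxisCP3 {CP3 : Type*} [TopologicalSpace CP3] (h : CP3 ≃ₜ CPmodel 3) : Set CP3 :=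
  {x | (h x).rep 2 = 0 ∧ (h x).rep 3 = 0}

/-- The standard pencil of `ℂP³`: the family of hyperplanes through the standard line,
i.e. `[z₀ : z₁ : z₂ : z₃] ↦ [z₂ : z₃]`, defined away from the standard line (junk value on
the line itself). -/
def stdPencilCP3 {CP3 CP1 : Type*} [TopologicalSpace CP3] [TopologicalSpace CP1]
    (h3 : CP3 ≃ₜ CPmodel 3) (h1 : CP1 ≃ₜ CPmodel 1) : CP3 → CP1 := fun x =>
  if h : (![(h3 x).rep 2, (h3 x).rep 3] : Fin 2 → ℂ) ≠ 0 then
    h1.symm (Projectivization.mk ℂ _ h)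
  else h1.symm (Projectivization.mk ℂ ![1, 0] (by intro hc; simpa using congrFun hc 0))

end Models

section Genus

/-- `GenusCurves X k` : there are `k` disjoint embedded circles in `X` with connected
complement. -/
def GenusCurves (X : Type*) [TopologicalSpace X] (k : ℕ) : Prop :=
  ∃ c : Fin k → (↥(Metric.sphere (0 : ℂ) 1) → X),
    (∀ i, IsEmbedding (c i)) ∧
    (Pairwise fun i j => Disjoint (Set.range (c i)) (Set.range (c j))) ∧
    IsConnected (⋃ i, Set.range (c i))ᶜ

/-- A closed connected orientable surface has genus `g` iff `g` is the maximal number of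
disjoint embedded circles with connected complement; we use this as the definition of
"having genus `g`". -/
def HasGenus (X : Type*) [TopologicalSpace X] (g : ℕ) : Prop :=
  GenusCurves X g ∧ ¬ GenusCurves X (g + 1)

end Genus

section SHL

def unitDisk : Set ℂ := Metric.closedBall 0 1
def unitCircleSet : Set ℂ := Metric.sphere 0 1
/-- The bidisk `𝔻² × 𝔻² ⊆ ℂ²`, a model of the `4`-ball `𝔻⁴`. -/
def biDisk : Set (ℂ × ℂ) := unitDisk ×ˢ unitDisk

/-- A separable Hopf link in a `4`-manifold `N`: an embedded `4`-ball `𝔻² × 𝔻²` such that the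
Hopf link `∂𝔻² × {0} ⊔ {0} × ∂𝔻²` bounds two disjoint properly embedded disks contained in
the complement of the open `4`-ball. -/
structure SeparableHopfLink (N : Type*) [TopologicalSpace N] where
  e : ℂ × ℂ → N
  he : IsEmbedding (biDisk.restrict e)
  d₁ : ℂ → N
  d₂ : ℂ → N
  hd₁ : IsEmbedding (unitDisk.restrict d₁)
  hd₂ : IsEmbedding (unitDisk.restrict d₂)
  hbd₁ : d₁ '' unitCircleSet = e '' {p : ℂ × ℂ | p.1 ∈ unitCircleSet ∧ p.2 = 0}
  hbd₂ : d₂ '' unitCircleSet = e '' {p : ℂ × ℂ | p.1 = 0 ∧ p.2 ∈ unitCircleSet}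
  hdisj : Disjoint (d₁ '' unitDisk) (d₂ '' unitDisk)
  houtside₁ : Disjoint (d₁ '' unitDisk) (e '' interior biDisk)
  houtside₂ : Disjoint (d₂ '' unitDisk) (e '' interior biDisk)
  hproper₁ : Disjoint (d₁ '' Metric.ball 0 1) (e '' biDisk)
  hproper₂ : Disjoint (d₂ '' Metric.ball 0 1) (e '' biDisk)

/-- `N` admits a separable Hopf link. -/
def HasSeparableHopfLink (N : Type*) [TopologicalSpace N] : Prop :=
  Nonempty (SeparableHopfLink N)

end SHL

section Fibrations

variable {EM HM : Type*} [NormedAddCommGroup EM] [NormedSpace ℝ EM] [TopologicalSpace HM]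
variable {ET HT : Type*} [NormedAddCommGroup ET] [NormedSpace ℝ ET] [TopologicalSpace HT]
variable {M : Type*} [TopologicalSpace M] [ChartedSpace HM M]
variable {T : Type*} [TopologicalSpace T] [ChartedSpace HT T]

/-- `f` has a Lefschetz singularity at `x`: in orientation preserving smoothly compatible
charts around `x` and `f x`, the map `f` is `(z₁, z₂) ↦ z₁ z₂`. -/
def IsLefschetzSingularAt {I : ModelWithCorners ℝ EM HM} {J : ModelWithCorners ℝ ET HT}
    (oM : MOrientation I M 4) (oT : MOrientation J T 2) (f : M → T) (x : M) : Prop :=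
  ∃ (φ : PartialHomeomorph M (En 4)) (ψ : PartialHomeomorph T (En 2)),
    IsSmoothChartOn I (En 4) φ ∧ IsSmoothChartOn J (En 2) ψ ∧
    PosChart oM φ ∧ PosChart oT ψ ∧
    x ∈ φ.source ∧ φ x = 0 ∧ f x ∈ ψ.source ∧ ψ (f x) = 0 ∧
    ∀ y ∈ φ.source, f y ∈ ψ.source ∧ ψ (f y) = lefschetzModel (φ y)

/-- `f` has a `1`-fold singularity at `x`: in orientation preserving smoothly compatible
charts, `f` is `(t, x₁, x₂, x₃) ↦ (t, -x₁² + x₂² + x₃²)`. -/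
def IsOneFoldSingularAt {I : ModelWithCorners ℝ EM HM} {J : ModelWithCorners ℝ ET HT}
    (oM : MOrientation I M 4) (oT : MOrientation J T 2) (f : M → T) (x : M) : Prop :=
  ∃ (φ : PartialHomeomorph M (En 4)) (ψ : PartialHomeomorph T (En 2)),
    IsSmoothChartOn I (En 4) φ ∧ IsSmoothChartOn J (En 2) ψ ∧
    PosChart oM φ ∧ PosChart oT ψ ∧
    x ∈ φ.source ∧ φ x = 0 ∧ f x ∈ ψ.source ∧ ψ (f x) = 0 ∧
    ∀ y ∈ φ.source, f y ∈ ψ.source ∧ ψ (f y) = oneFoldModel (φ y)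

/-- `x` is a regular point of `f` (the differential is surjective). -/
def IsRegularPt (I : ModelWithCorners ℝ EM HM) (J : ModelWithCorners ℝ ET HT)
    (f : M → T) (x : M) : Prop :=
  Function.Surjective (mfderiv I J f x)

/-- The set of `1`-fold singular points of `f`. -/
def oneFoldLocus {I : ModelWithCorners ℝ EM HM} {J : ModelWithCorners ℝ ET HT}
    (oM : MOrientation I M 4) (oT : MOrientation J T 2) (f : M → T) : Set M :=
  {x | IsOneFoldSingularAt oM oT f x}

/-- The set of Lefschetz singular points of `f`. -/
def lefschetzLocus {I : ModelWithCorners ℝ EM HM} {J : ModelWithCorners ℝ ET HT}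
    (oM : MOrientation I M 4) (oT : MOrientation J T 2) (f : M → T) : Set M :=
  {x | IsLefschetzSingularAt oM oT f x}

/-- A broken Lefschetz fibration: a smooth map whose only singularities are Lefschetz or
`1`-fold singularities. -/
def IsBLF {I : ModelWithCorners ℝ EM HM} {J : ModelWithCorners ℝ ET HT}
    (oM : MOrientation I M 4) (oT : MOrientation J T 2) (f : M → T) : Prop :=
  ContMDiff I J (⊤ : ℕ∞) f ∧
    ∀ x : M, IsRegularPt I J f x ∨ IsLefschetzSingularAt oM oT f x ∨
      IsOneFoldSingularAt oM oT f x

/-- A simplified broken Lefschetz fibration (SBLF): a BLF whose `1`-fold singular set is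
connected, whose fibers are all connected, and which is injective on the `1`-fold singular
set and on the Lefschetz singular set. -/
def IsSBLF {I : ModelWithCorners ℝ EM HM} {J : ModelWithCorners ℝ ET HT}
    (oM : MOrientation I M 4) (oT : MOrientation J T 2) (f : M → T) : Prop :=
  IsBLF oM oT f ∧ IsPreconnected (oneFoldLocus oM oT f) ∧
    (∀ y : T, IsConnected (f ⁻¹' {y})) ∧
    Set.InjOn f (oneFoldLocus oM oT f) ∧ Set.InjOn f (lefschetzLocus oM oT f)

/-- A Lefschetz fibration: a smooth map whose only singularities are Lefschetz
singularities. -/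
def IsLefschetzFibration {I : ModelWithCorners ℝ EM HM} {J : ModelWithCorners ℝ ET HT}
    (oM : MOrientation I M 4) (oT : MOrientation J T 2) (f : M → T) : Prop :=
  ContMDiff I J (⊤ : ℕ∞) f ∧ ∀ x : M, IsRegularPt I J f x ∨ IsLefschetzSingularAt oM oT f x

/-- The set of critical values of `f`. -/
def criticalValues (I : ModelWithCorners ℝ EM HM) (J : ModelWithCorners ℝ ET HT)
    (f : M → T) : Set T :=
  f '' {x | ¬ IsRegularPt I J f x}

/-- A simplified Lefschetz fibration (SLF): a Lefschetz fibration whose critical values are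
isolated and whose fibers are connected. -/
def IsSLF {I : ModelWithCorners ℝ EM HM} {J : ModelWithCorners ℝ ET HT}
    (oM : MOrientation I M 4) (oT : MOrientation J T 2) (f : M → T) : Prop :=
  IsLefschetzFibration oM oT f ∧
    (∀ y ∈ criticalValues I J f, ∃ U : Set T, IsOpen U ∧ y ∈ U ∧
      U ∩ criticalValues I J f ⊆ {y}) ∧
    ∀ y : T, IsConnected (f ⁻¹' {y})

/-- `y` is a regular value of `f`. -/
def IsRegularValue (I : ModelWithCorners ℝ EM HM) (J : ModelWithCorners ℝ ET HT)
    (f : M → T) (y : T) : Prop :=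
  ∀ x ∈ f ⁻¹' {y}, IsRegularPt I J f x

/-- The lower genus fiber of the fibration `f` has genus `> k`: some regular fiber has
minimal genus `g` among all regular fibers, and `k < g`. -/
def LowerGenusGT (I : ModelWithCorners ℝ EM HM) (J : ModelWithCorners ℝ ET HT)
    (f : M → T) (k : ℕ) : Prop :=
  ∃ (y : T) (g : ℕ), IsRegularValue I J f y ∧ HasGenus ↥(f ⁻¹' {y}) g ∧ k < g ∧
    ∀ (y' : T) (g' : ℕ), IsRegularValue I J f y' → HasGenus ↥(f ⁻¹' {y'}) g' → g ≤ g'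

end Fibrations

section FlexibleStandard

variable {S N : Type*} [TopologicalSpace S] [ChartedSpace (En 2) S]
  [TopologicalSpace N] [ChartedSpace (En 4) N]

/-- The embedding `φ : Σ ↪ N` is flexible: every (orientation preserving) diffeomorphism of
`Σ`, i.e. every element of the mapping class group, is induced by a diffeomorphism of `N`
isotopic to the identity preserving `φ(Σ)`. -/
def FlexibleEmbedding (oS : MOrientation (𝓡 2) S 2) (φ : S → N) : Prop :=
  ∀ g : S → S, IsDiffeomorphismOf (𝓡 2) g → OrientationPreservingMap oS oS g →
    ∃ ψ : N → N, DiffeotopicToId (𝓡 4) ψ ∧ ψ '' Set.range φ = Set.range φ ∧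
      ∀ x, ψ (φ x) = φ (g x)

/-- The embedding `φ : Σ ↪ N` is in standard position: every simple closed curve `γ` on
`φ(Σ)` bounds an embedded disk meeting `φ(Σ)` only in `γ`, and this disk has a tubular
neighborhood which is the image of a smooth coordinate chart `ℂ² → N` in which `φ(Σ)`
corresponds to `{(z₁, z₂) | z₁ z₂ = 1}`. -/
def StandardPositionEmbedding (φ : S → N) : Prop :=
  ∀ γ : Set N, γ ⊆ Set.range φ →
    (∃ c : ↥(Metric.sphere (0 : ℂ) 1) → N, IsEmbedding c ∧ Set.range c = γ) →
    ∃ d : ℂ → N, IsEmbedding (unitDisk.restrict d) ∧ d '' unitCircleSet = γ ∧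
      (d '' unitDisk) ∩ Set.range φ = γ ∧
      ∃ Φ : ℂ × ℂ → N, IsOpenEmbedding Φ ∧ ContMDiff 𝓘(ℝ, ℂ × ℂ) (𝓡 4) (⊤ : ℕ∞) Φ ∧
        d '' unitDisk ⊆ Set.range Φ ∧
        Φ ⁻¹' (Set.range φ) = {p : ℂ × ℂ | p.1 * p.2 = 1}

/-- A standard embedding of a surface in a `4`-manifold: a smooth embedding which is
flexible and in standard position (this is the key property of the embeddings produced by
the construction of Ghanwat–Pancholi, Lemma 4.6). -/
def StandardEmbedding (oS : MOrientation (𝓡 2) S 2) (φ : S → N) : Prop :=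
  IsSmoothEmbedding (𝓡 2) (𝓡 4) φ ∧ FlexibleEmbedding oS φ ∧ StandardPositionEmbedding φ

end FlexibleStandard

section Intersections

variable {X : Type*} [TopologicalSpace X] [ChartedSpace (En 4) X]

def plane01 : Set (En 4) := {v | v 2 = 0 ∧ v 3 = 0}
def plane23 : Set (En 4) := {v | v 0 = 0 ∧ v 1 = 0}
def proj01 : En 4 → En 2 := fun v => e2 (v 0) (v 1)
def proj23 : En 4 → En 2 := fun v => e2 (v 2) (v 3)
def incl01 : En 2 → En 4 := fun w => e4 (w 0) (w 1) 0 0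

/-- An oriented smoothly embedded (unparameterized) surface `S` in a `4`-manifold `X`:
a family of smoothly compatible ambient charts flattening `S` onto the plane
`{x₂ = x₃ = 0}`, covering `S`, whose induced transition maps on the surface have positive
Jacobian determinant. -/
structure SubsurfaceOrientation (X : Type*) [TopologicalSpace X] [ChartedSpace (En 4) X]
    (S : Set X) where
  charts : Set (PartialHomeomorph X (En 4))
  smooth : ∀ φ ∈ charts, IsSmoothChartOn (𝓡 4) (En 4) φ
  flat : ∀ φ ∈ charts, φ.source ∩ S = φ.source ∩ ↑φ ⁻¹' plane01
  covers : S ⊆ ⋃ φ ∈ charts, φ.source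
  pos : ∀ φ ∈ charts, ∀ ψ ∈ charts, ∀ p ∈ S ∩ φ.source ∩ ψ.source,
    0 < LinearMap.det
      ((fderiv ℝ (proj01 ∘ ↑ψ ∘ ↑φ.symm ∘ incl01) (proj01 (φ p))).toLinearMap)

/-- The ambient chart `φ` restricts on the surface `S` (flattened via `pr`) positively with
respect to the surface orientation `oS`. -/
def ChartAligned {S : Set X} (oS : SubsurfaceOrientation X S) (pr : En 4 → En 2)
    (φ : PartialHomeomorph X (En 4)) : Prop :=
  ∀ e ∈ oS.charts, ∀ q ∈ S ∩ e.source ∩ φ.source,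
    0 < LinearMap.det
      ((fderiv ℝ (pr ∘ ↑φ ∘ ↑e.symm ∘ incl01) (proj01 (e q))).toLinearMap)

/-- The oriented surfaces `S`, `T` in the oriented `4`-manifold `(X, oX)` intersect
transversally at `p` with sign `s ∈ {±1}`: there is a smoothly compatible chart sending `S`
to `{x₂ = x₃ = 0}` and `T` to `{x₀ = x₁ = 0}`, aligned with the orientations of `S` and `T`,
which is positively (resp. negatively) oriented for `s = 1` (resp. `s = -1`). -/
def TransverseIntersectionAt (oX : MOrientation (𝓡 4) X 4) {S T : Set X}
    (oS : SubsurfaceOrientation X S) (oT : SubsurfaceOrientation X T) (p : X) (s : ℤ) :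
    Prop :=
  ∃ φ : PartialHomeomorph X (En 4), IsSmoothChartOn (𝓡 4) (En 4) φ ∧ p ∈ φ.source ∧
    φ p = 0 ∧
    φ.source ∩ S = φ.source ∩ ↑φ ⁻¹' plane01 ∧
    φ.source ∩ T = φ.source ∩ ↑φ ⁻¹' plane23 ∧
    ChartAligned oS proj01 φ ∧ ChartAligned oT proj23 φ ∧
    ((s = 1 ∧ PosChart oX φ) ∨ (s = -1 ∧ NegChart oX φ))

/-- The algebraic intersection number of the transverse oriented surfaces `S` and `T` in
`(X, oX)` equals `n`: all intersections are transverse and the signs sum to `n`. -/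
def IntersectionNumberEq (oX : MOrientation (𝓡 4) X 4) {S T : Set X}
    (oS : SubsurfaceOrientation X S) (oT : SubsurfaceOrientation X T) (n : ℤ) : Prop :=
  ∃ (P : Finset X) (sgn : X → ℤ), (P : Set X) = S ∩ T ∧
    (∀ p ∈ P, TransverseIntersectionAt oX oS oT p (sgn p)) ∧ ∑ p ∈ P, sgn p = n

/-- The map `ψ` carries the orientation `oS` of `S` to the orientation `oS'` of `S' = ψ(S)`. -/
def PushforwardAligned (ψ : X → X) {S S' : Set X} (oS : SubsurfaceOrientation X S)
    (oS' : SubsurfaceOrientation X S') : Prop :=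
  ∀ e ∈ oS.charts, ∀ e' ∈ oS'.charts, ∀ q ∈ S ∩ e.source, ψ q ∈ e'.source →
    0 < LinearMap.det
      ((fderiv ℝ (proj01 ∘ ↑e' ∘ ψ ∘ ↑e.symm ∘ incl01) (proj01 (e q))).toLinearMap)

/-- The self-intersection number of the oriented surface `(S, oS)` in `(X, oX)` equals `n`:
some copy of `S`, moved by a diffeomorphism isotopic to the identity with the transported
orientation, meets `S` transversally with total algebraic intersection number `n`. -/
def SelfIntersectionEq (oX : MOrientation (𝓡 4) X 4) {S : Set X}
    (oS : SubsurfaceOrientation X S) (n : ℤ) : Prop :=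
  ∃ ψ : X → X, DiffeotopicToId (𝓡 4) ψ ∧ ∃ oS' : SubsurfaceOrientation X (ψ '' S),
    PushforwardAligned ψ oS oS' ∧ IntersectionNumberEq oX oS' oS n

end Intersections

section BlowUp

instance factFinrank3 : Fact (Module.finrank ℝ (En 3) = 2 + 1) := ⟨finrank_euclideanSpace_fin⟩

/-- `X` together with the structure of the (topological) two-point blow-up
`M # ℂP² # (ℂP²-bar)` of the `4`-manifold `M` at two points `p₁ ≠ p₂`: a blow-down map
`bd : X → M` collapsing two disjoint exceptional spheres `Epos` (of self-intersection `+1`)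
and `Eneg` (of self-intersection `-1`) to `p₁` and `p₂`, and a diffeomorphism elsewhere. -/
structure TwoPointBlowUpData (X M : Type*) [TopologicalSpace X] [ChartedSpace (En 4) X]
    [TopologicalSpace M] [ChartedSpace (En 4) M] (oX : MOrientation (𝓡 4) X 4) where
  bd : X → M
  p₁ : M
  p₂ : M
  hp : p₁ ≠ p₂
  Epos : Set X
  Eneg : Set X
  hEpos : bd ⁻¹' {p₁} = Epos
  hEneg : bd ⁻¹' {p₂} = Eneg
  spherePos : Nonempty (↥Epos ≃ₜ ↥(Metric.sphere (0 : En 3) 1))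
  sphereNeg : Nonempty (↥Eneg ≃ₜ ↥(Metric.sphere (0 : En 3) 1))
  cont : Continuous bd
  surj : Function.Surjective bd
  injOn : Set.InjOn bd (Epos ∪ Eneg)ᶜ
  smoothOn : ContMDiffOn (𝓡 4) (𝓡 4) (⊤ : ℕ∞) bd (Epos ∪ Eneg)ᶜ
  isOpenImage : ∀ U : Set X, IsOpen U → U ⊆ (Epos ∪ Eneg)ᶜ → IsOpen (bd '' U)
  oEpos : SubsurfaceOrientation X Epos
  oEneg : SubsurfaceOrientation X Eneg
  selfIntPos : SelfIntersectionEq oX oEpos 1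
  selfIntNeg : SelfIntersectionEq oX oEneg (-1)

/-- The fibration `f` agrees with the standard fibration (by normal disks over `ℂP¹`) on a
tubular neighborhood of the exceptional sphere `E`. -/
def StandardFibrationNear {X CP1 : Type*} [TopologicalSpace X] [TopologicalSpace CP1]
    (f : X → CP1) (E : Set X) : Prop :=
  ∃ U : Set X, IsOpen U ∧ E ⊆ U ∧ Set.BijOn f E Set.univ ∧
    ∀ y : CP1, Nonempty (↥(f ⁻¹' {y} ∩ U) ≃ₜ ↥(Metric.ball (0 : ℂ) 1))

/-- Near the base point `b`, the pencil `π` is given in a smoothly compatible chart by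
`(z₁, z₂) ↦ [z₁ : z₂] (= z₂/z₁)`, where the chart is not required to preserve
orientations. -/
def BaseLocusModelAt {M CP1 : Type*} [TopologicalSpace M] [ChartedSpace (En 4) M]
    [TopologicalSpace CP1] (hCP1 : CP1 ≃ₜ CPmodel 1) (π : M → CP1) (b : M) : Prop :=
  ∃ φ : PartialHomeomorph M (En 4), IsSmoothChartOn (𝓡 4) (En 4) φ ∧ b ∈ φ.source ∧
    φ b = 0 ∧
    ∀ y ∈ φ.source, y ≠ b → ∃ h : (![cA (φ y), cB (φ y)] : Fin 2 → ℂ) ≠ 0,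
      hCP1 (π y) = Projectivization.mk ℂ ![cA (φ y), cB (φ y)] h

/-- A generalized simplified broken Lefschetz pencil on `M` with (finite) base locus `B`:
away from `B` the map is an SBLF, and near each base point it is `(z₁, z₂) ↦ z₂/z₁` in a
(not necessarily orientation preserving) chart. -/
def IsGeneralizedSBLP {M CP1 : Type*} [TopologicalSpace M] [ChartedSpace (En 4) M]
    [TopologicalSpace CP1] [ChartedSpace (En 2) CP1]
    (oM : MOrientation (𝓡 4) M 4) (oCP1 : MOrientation (𝓡 2) CP1 2)
    (hCP1 : CP1 ≃ₜ CPmodel 1) (π : M → CP1) (B : Set M) : Prop :=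
  B.Finite ∧
    ContMDiffOn (𝓡 4) (𝓡 2) (⊤ : ℕ∞) π Bᶜ ∧
    (∀ x ∉ B, IsRegularPt (𝓡 4) (𝓡 2) π x ∨ IsLefschetzSingularAt oM oCP1 π x ∨
      IsOneFoldSingularAt oM oCP1 π x) ∧
    IsPreconnected (oneFoldLocus oM oCP1 π ∩ Bᶜ) ∧
    Set.InjOn π (oneFoldLocus oM oCP1 π ∩ Bᶜ) ∧
    Set.InjOn π (lefschetzLocus oM oCP1 π ∩ Bᶜ) ∧
    (∀ y : CP1, IsPreconnected (π ⁻¹' {y} ∩ Bᶜ)) ∧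
    ∀ b ∈ B, BaseLocusModelAt hCP1 π b

end BlowUp

/-!
In homogeneous coordinates the bidisk is `{[1 : z₁ : z₂] : |z₁|, |z₂| ≤ 1}`, and the two
components of its Hopf link bound the disks `{[z : 1 : 0] : |z| ≤ 1}` and
`{[z : 0 : 1] : |z| ≤ 1}`, which complete the coordinate disks to the projective lines
`z₂ = 0` and `z₁ = 0`. Since `[z : u] = [1 : z⁻¹ • u]`, a point of such a disk lies in the
closed (open) bidisk only if `|z| ≥ 1` (`|z| > 1`), so each disk meets the `4`-ball exactly in
its boundary circle. All maps are continuous and injective on compact sets, and `ℂP²` is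
Hausdorff, so they are embeddings.
-/

open Projectivization

theorem Projectivization.mk_eq_mk_iff_mul_eq_mul {K ι : Type*} [Field K] {v w : ι → K}
    (hv : v ≠ 0) (hw : w ≠ 0) : mk K v hv = mk K w hw ↔ ∀ i j, v i * w j = v j * w i := by
  rw [mk_eq_mk_iff']
  constructor
  · rintro ⟨a, rfl⟩ i j
    simp only [Pi.smul_apply, smul_eq_mul]
    ring
  · intro h
    obtain ⟨j, hj⟩ := Function.ne_iff.1 hw
    refine ⟨v j / w j, funext fun i => ?_⟩
    simp only [Pi.smul_apply, smul_eq_mul, Pi.zero_apply] at hj ⊢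
    field_simp
    linear_combination -h i j

theorem IsCompact.isEmbedding_domRestrict {X Y : Type*} [TopologicalSpace X]
    [TopologicalSpace Y] [T2Space Y] {K : Set X} (hK : IsCompact K) {f : X → Y}
    (hf : ContinuousOn f K) (hinj : InjOn f K) : IsEmbedding (K.domRestrict f) :=
  have : CompactSpace K := isCompact_iff_compactSpace.1 hK
  (hf.domRestrict.isClosedEmbedding (injOn_iff_injective.1 hinj)).isEmbedding

def SeparableHopfLink.map {N N' : Type*} [TopologicalSpace N] [TopologicalSpace N']
    (L : SeparableHopfLink N) (f : N → N') (hf : IsEmbedding f) : SeparableHopfLink N' where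
  e := f ∘ L.e
  he := hf.comp L.he
  d₁ := f ∘ L.d₁
  d₂ := f ∘ L.d₂
  hd₁ := hf.comp L.hd₁
  hd₂ := hf.comp L.hd₂
  hbd₁ := by rw [image_comp, image_comp, L.hbd₁]
  hbd₂ := by rw [image_comp, image_comp, L.hbd₂]
  hdisj := by simpa only [image_comp] using (disjoint_image_iff hf.injective).2 L.hdisj
  houtside₁ := by simpa only [image_comp] using (disjoint_image_iff hf.injective).2 L.houtside₁
  houtside₂ := by simpa only [image_comp] using (disjoint_image_iff hf.injective).2 L.houtside₂
  hproper₁ := by simpa only [image_comp] using (disjoint_image_iff hf.injective).2 L.hproper₁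
  hproper₂ := by simpa only [image_comp] using (disjoint_image_iff hf.injective).2 L.hproper₂

theorem biDisk_eq_closedBall : biDisk = closedBall 0 1 := by
  rw [biDisk, unitDisk, closedBall_prod_same]
  rfl

theorem interior_biDisk : interior biDisk = ball 0 1 := by
  rw [biDisk_eq_closedBall, interior_closedBall _ one_ne_zero]

namespace CPmodel

variable {n : ℕ}

theorem continuous_mk {X : Type*} [TopologicalSpace X] {f : X → Fin (n + 1) → ℂ}
    (hf : Continuous f) (hf₀ : ∀ x, f x ≠ 0) :
    Continuous fun x => (mk ℂ (f x) (hf₀ x) : CPmodel n) :=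
  continuous_quot_mk.comp (hf.subtype_mk hf₀)

/-- `‖v ∧ w‖²`, up to a factor `2`, in the standard coordinates. -/
def wedgeNormSq (v w : Fin (n + 1) → ℂ) : ℝ :=
  ∑ i, ∑ j, ‖v i * w j - v j * w i‖ ^ 2

theorem wedgeNormSq_smul (t : ℂ) (v w : Fin (n + 1) → ℂ) :
    wedgeNormSq (t • v) w = ‖t‖ ^ 2 * wedgeNormSq v w := by
  simp only [wedgeNormSq, Finset.mul_sum, Pi.smul_apply, smul_eq_mul, ← mul_pow, ← norm_mul,
    mul_sub, mul_assoc]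

theorem wedgeNormSq_eq_zero_iff (v w : Fin (n + 1) → ℂ) :
    wedgeNormSq v w = 0 ↔ ∀ i j, v i * w j = v j * w i := by
  simp only [wedgeNormSq]
  rw [Finset.sum_eq_zero_iff_of_nonneg fun _ _ => Finset.sum_nonneg fun _ _ => by positivity]
  simp only [Finset.mem_univ, true_implies]
  refine forall_congr' fun i => ?_
  rw [Finset.sum_eq_zero_iff_of_nonneg fun _ _ => by positivity]
  simp [sub_eq_zero]

theorem continuous_wedgeNormSq (w : Fin (n + 1) → ℂ) : Continuous fun v => wedgeNormSq v w := by
  unfold wedgeNormSq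
  fun_prop

def wedgeRatio (w : Fin (n + 1) → ℂ) : CPmodel n → ℝ :=
  Projectivization.lift (fun v => wedgeNormSq v.1 w / ‖v.1‖ ^ 2) <| by
    rintro ⟨a, ha⟩ ⟨b, hb⟩ t (rfl : a = t • b)
    have ht : t ≠ 0 := by rintro rfl; exact ha (zero_smul ℂ b)
    simp only [wedgeNormSq_smul, norm_smul, mul_pow]
    exact mul_div_mul_left _ _ (by positivity)

theorem wedgeRatio_mk (w v : Fin (n + 1) → ℂ) (hv : v ≠ 0) :
    wedgeRatio w (mk ℂ v hv) = wedgeNormSq v w / ‖v‖ ^ 2 :=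
  Projectivization.lift_mk _ _ _ hv

theorem continuous_wedgeRatio (w : Fin (n + 1) → ℂ) : Continuous (wedgeRatio w) := by
  refine continuous_quot_lift _ <| .div ((continuous_wedgeNormSq w).comp continuous_subtype_val)
    (by fun_prop) fun v => pow_ne_zero _ (norm_ne_zero_iff.2 v.2)

theorem wedgeRatio_eq_zero_iff {w : Fin (n + 1) → ℂ} (hw : w ≠ 0) (x : CPmodel n) :
    wedgeRatio w x = 0 ↔ x = mk ℂ w hw := by
  induction x using Projectivization.ind with
  | h v hv =>
    rw [wedgeRatio_mk, div_eq_zero_iff, mk_eq_mk_iff_mul_eq_mul, ← wedgeNormSq_eq_zero_iff]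
    simp [hv]

instance : T2Space (CPmodel n) where
  t2 x y hxy := separated_by_continuous (continuous_wedgeRatio y.rep) <| by
    rw [(wedgeRatio_eq_zero_iff y.rep_nonzero y).2 y.mk_rep.symm, ne_eq,
      wedgeRatio_eq_zero_iff y.rep_nonzero, mk_rep]
    exact hxy

def homCoords (a : ℂ) (p : ℂ × ℂ) : Fin 3 → ℂ := ![a, p.1, p.2]

theorem homCoords_inj {a b : ℂ} {p q : ℂ × ℂ} :
    homCoords a p = homCoords b q ↔ a = b ∧ p = q := by
  simp [homCoords, Prod.ext_iff]

theorem homCoords_eq_zero_iff {a : ℂ} {p : ℂ × ℂ} :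
    homCoords a p = 0 ↔ a = 0 ∧ p = 0 := by
  simp [homCoords, funext_iff, Fin.forall_fin_succ, Prod.ext_iff]

theorem smul_homCoords (c a : ℂ) (p : ℂ × ℂ) :
    c • homCoords a p = homCoords (c * a) (c • p) := by
  ext i
  fin_cases i <;> simp [homCoords]

theorem continuous_homCoords : Continuous fun x : ℂ × (ℂ × ℂ) => homCoords x.1 x.2 := by
  refine continuous_pi fun i => ?_
  fin_cases i <;> simp only [homCoords] <;> fun_prop

theorem mk_homCoords_eq_mk_homCoords_iff {a b : ℂ} {p q : ℂ × ℂ} (h : homCoords a p ≠ 0)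
    (h' : homCoords b q ≠ 0) :
    mk ℂ (homCoords a p) h = mk ℂ (homCoords b q) h' ↔
      ∃ c : ℂ, c * b = a ∧ c • q = p := by
  simp only [mk_eq_mk_iff', smul_homCoords, homCoords_inj]

def affinePoint (p : ℂ × ℂ) : CPmodel 2 :=
  mk ℂ (homCoords 1 p) (by simp [homCoords_eq_zero_iff])

/-- For `z ≠ 0`, `[z : u] = [1 : z⁻¹ • u]`, so `linePoint u hu` parametrizes the line `ℂ u`
of the affine chart near its point at infinity. -/
def linePoint (u : ℂ × ℂ) (hu : u ≠ 0) (z : ℂ) : CPmodel 2 :=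
  mk ℂ (homCoords z u) (by simp [homCoords_eq_zero_iff, hu])

theorem continuous_affinePoint : Continuous affinePoint :=
  continuous_mk (continuous_homCoords.comp (continuous_const.prodMk continuous_id)) _

theorem continuous_linePoint {u : ℂ × ℂ} (hu : u ≠ 0) : Continuous (linePoint u hu) :=
  continuous_mk (continuous_homCoords.comp (continuous_id.prodMk continuous_const)) _

theorem affinePoint_injective : Injective affinePoint := by
  intro p q h
  obtain ⟨c, hc, rfl⟩ := (mk_homCoords_eq_mk_homCoords_iff _ _).1 h.symm
  rw [mul_one] at hc
  rw [hc, one_smul]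

theorem linePoint_injective {u : ℂ × ℂ} (hu : u ≠ 0) : Injective (linePoint u hu) := by
  intro z w h
  obtain ⟨c, rfl, hc⟩ := (mk_homCoords_eq_mk_homCoords_iff _ _).1 h.symm
  rw [smul_left_injective ℂ hu (hc.trans (one_smul ℂ u).symm), one_mul]

theorem linePoint_eq_affinePoint_iff {u : ℂ × ℂ} (hu : u ≠ 0) (z : ℂ) (p : ℂ × ℂ) :
    linePoint u hu z = affinePoint p ↔ z • p = u := by
  rw [linePoint, affinePoint, mk_homCoords_eq_mk_homCoords_iff]
  simp

theorem linePoint_ne_linePoint (z w : ℂ) :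
    linePoint (1, 0) (by simp) z ≠ linePoint (0, 1) (by simp) w := by
  rw [linePoint, linePoint, Ne, mk_homCoords_eq_mk_homCoords_iff]
  simp

theorem disjoint_linePoint_image_affinePoint_image {u : ℂ × ℂ} (hu : u ≠ 0) {s : Set ℂ}
    {t : Set (ℂ × ℂ)} (h : ∀ z ∈ s, ∀ p ∈ t, ‖z‖ * ‖p‖ ≠ ‖u‖) :
    Disjoint (linePoint u hu '' s) (affinePoint '' t) := by
  rw [disjoint_left]
  rintro _ ⟨z, hz, rfl⟩ ⟨p, hp, hzp⟩
  rw [eq_comm, linePoint_eq_affinePoint_iff] at hzp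
  exact h z hz p hp (by rw [← hzp, norm_smul])

theorem linePoint_image_sphere {u : ℂ × ℂ} (hu : u ≠ 0) :
    linePoint u hu '' sphere 0 1 = affinePoint '' ((· • u) '' sphere (0 : ℂ) 1) := by
  have hinv : Inv.inv '' sphere (0 : ℂ) 1 = sphere 0 1 := by
    ext z
    simp
  conv_rhs => rw [← hinv, image_image, image_image]
  refine image_congr fun z hz => (linePoint_eq_affinePoint_iff hu _ _).2 ?_
  rw [smul_smul, mul_inv_cancel₀ (ne_zero_of_mem_unit_sphere ⟨z, hz⟩), one_smul]

theorem disjoint_linePoint_closedBall_affinePoint_ball {u : ℂ × ℂ} (hu : u ≠ 0)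
    (hu₁ : ‖u‖ = 1) :
    Disjoint (linePoint u hu '' closedBall 0 1) (affinePoint '' ball 0 1) :=
  disjoint_linePoint_image_affinePoint_image hu fun _ hz p hp => hu₁ ▸
    (mul_lt_one_of_nonneg_of_lt_one_right (mem_closedBall_zero_iff.1 hz) (norm_nonneg p)
      (mem_ball_zero_iff.1 hp)).ne

theorem disjoint_linePoint_ball_affinePoint_closedBall {u : ℂ × ℂ} (hu : u ≠ 0)
    (hu₁ : ‖u‖ = 1) :
    Disjoint (linePoint u hu '' ball 0 1) (affinePoint '' closedBall 0 1) :=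
  disjoint_linePoint_image_affinePoint_image hu fun z hz _ hp => hu₁ ▸
    (mul_lt_one_of_nonneg_of_lt_one_left (norm_nonneg z) (mem_ball_zero_iff.1 hz)
      (mem_closedBall_zero_iff.1 hp)).ne

def separableHopfLink : SeparableHopfLink (CPmodel 2) where
  e := affinePoint
  he := (biDisk_eq_closedBall ▸ isCompact_closedBall 0 1 : IsCompact biDisk)
    |>.isEmbedding_domRestrict continuous_affinePoint.continuousOn affinePoint_injective.injOn
  d₁ := linePoint (1, 0) (by simp)
  d₂ := linePoint (0, 1) (by simp)
  hd₁ := (isCompact_closedBall 0 1).isEmbedding_domRestrict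
    (continuous_linePoint _).continuousOn (linePoint_injective _).injOn
  hd₂ := (isCompact_closedBall 0 1).isEmbedding_domRestrict
    (continuous_linePoint _).continuousOn (linePoint_injective _).injOn
  hbd₁ := by
    rw [unitCircleSet, linePoint_image_sphere]
    congr 1
    ext ⟨a, b⟩
    simp [eq_comm]
  hbd₂ := by
    rw [unitCircleSet, linePoint_image_sphere]
    congr 1
    ext ⟨a, b⟩
    simp [eq_comm, and_comm]
  hdisj := by
    rw [disjoint_left]
    rintro _ ⟨z, -, rfl⟩ ⟨w, -, h⟩
    exact linePoint_ne_linePoint z w h.symm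
  houtside₁ := by
    rw [interior_biDisk]
    exact disjoint_linePoint_closedBall_affinePoint_ball _ (by simp)
  houtside₂ := by
    rw [interior_biDisk]
    exact disjoint_linePoint_closedBall_affinePoint_ball _ (by simp)
  hproper₁ := by
    rw [biDisk_eq_closedBall]
    exact disjoint_linePoint_ball_affinePoint_closedBall _ (by simp)
  hproper₂ := by
    rw [biDisk_eq_closedBall]
    exact disjoint_linePoint_ball_affinePoint_closedBall _ (by simp)

end CPmodel

/-- The complex projective plane `ℂP²` admits a separable Hopf link. -/
theorem CP2_has_separableHopfLink
    (CP2 : Type*) [TopologicalSpace CP2] (hCP2 : CP2 ≃ₜ CPmodel 2) :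
    HasSeparableHopfLink CP2 :=
  ⟨CPmodel.separableHopfLink.map hCP2.symm hCP2.symm.isEmbedding⟩
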